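/- Let τ = (V(τ), E(τ), U_τ, V_τ) be a shape and let L : E(τ) → {F, R, H, Singleton} be any labeling of its edges. Define S_B ⊆ V(τ) as the union of: (i) all vertices lying in both U_τ and V_τ (as vertex sets); (ii) all endpoints of edges labeled H; (iii) all vertices incident to both an edge labeled F and an edge labeled R; (iv) all vertices of U_τ incident to an edge labeled F; (v) all vertices of V_τ incident to an edge labeled R. Then every path in τ from a vertex of U_τ to a vertex of V_τ that contains no vertex of S_B must use at least one edge labeled Singleton; in particular, if some path from U_τ to V_τ avoids S_B (so S_B fails to be a vertex separator), that path contains a Singleton-labeled edge. -/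
import Mathlib


open scoped Classical

noncomputable section

namespace GM

/-- A graph on vertex set `Fin n`, given as a finite set of (potential) edges. -/
abbrev Graph (n : ℕ) := Finset (Sym2 (Fin n))

/-- The edge set contains no self-loops. -/
def IsSimpleG {n : ℕ} (G : Graph n) : Prop := ∀ e ∈ G, ¬ e.IsDiag

/-- Degree of a vertex. -/
def degree {n : ℕ} (G : Graph n) (v : Fin n) : ℕ := (G.filter (fun e => v ∈ e)).card

/-- The set of simple `d`-regular graphs on `n` vertices. -/
def regularGraphs (n d : ℕ) : Finset (Graph n) :=
  Finset.univ.filter (fun G => IsSimpleG G ∧ ∀ v, degree G v = d)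

/-- Expectation of `f` under the uniform distribution on `d`-regular graphs. -/
def regExp (n d : ℕ) (f : Graph n → ℝ) : ℝ :=
  (∑ G ∈ regularGraphs n d, f G) / (regularGraphs n d).card

/-- Probability of `P` under the uniform distribution on `d`-regular graphs. -/
def regPr (n d : ℕ) (P : Graph n → Prop) : ℝ :=
  (((regularGraphs n d).filter P).card : ℝ) / (regularGraphs n d).card

/-- The `p`-biased edge character. -/
def char {n : ℕ} (p : ℝ) (G : Graph n) (e : Sym2 (Fin n)) : ℝ :=
  if e ∈ G then Real.sqrt ((1 - p) / p) else - Real.sqrt (p / (1 - p))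

/-- A shape: a simple graph on `Fin m` with ordered tuples of distinct boundary vertices. -/
structure Shape where
  m : ℕ
  edges : Finset (Sym2 (Fin m))
  simple : ∀ e ∈ edges, ¬ e.IsDiag
  a : ℕ
  b : ℕ
  U : Fin a → Fin m
  V : Fin b → Fin m
  injU : Function.Injective U
  injV : Function.Injective V

/-- The simple graph underlying a shape. -/
def Shape.graph (τ : Shape) : SimpleGraph (Fin τ.m) :=
  SimpleGraph.fromEdgeSet (τ.edges : Set (Sym2 (Fin τ.m)))

/-- The boundary vertices of a shape. -/
def Shape.boundary (τ : Shape) : Finset (Fin τ.m) :=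
  Finset.univ.image τ.U ∪ Finset.univ.image τ.V

/-- The graph matrix of a shape, evaluated on a graph `G` with `p`-biased characters. -/
def graphMatrix (τ : Shape) (n : ℕ) (p : ℝ) (G : Graph n) :
    Matrix (Fin τ.a → Fin n) (Fin τ.b → Fin n) ℝ :=
  Matrix.of fun A B =>
    ∑ ψ ∈ Finset.univ.filter (fun ψ : Fin τ.m → Fin n =>
        Function.Injective ψ ∧ (∀ i, ψ (τ.U i) = A i) ∧ (∀ j, ψ (τ.V j) = B j)),
      ∏ e ∈ τ.edges, char p G (e.map ψ)

/-- `S` is a vertex separator of the shape `τ`: every path from the left boundary to the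
right boundary contains a vertex of `S`. -/
def IsSeparator (τ : Shape) (S : Finset (Fin τ.m)) : Prop :=
  ∀ (i : Fin τ.a) (j : Fin τ.b) (w : τ.graph.Walk (τ.U i) (τ.V j)),
    w.IsPath → ∃ v ∈ w.support, v ∈ S

/-- The set of edges of `τ` with both endpoints in `S`. -/
def edgesIn (τ : Shape) (S : Finset (Fin τ.m)) : Finset (Sym2 (Fin τ.m)) :=
  τ.edges.filter (fun e => ∀ v ∈ e, v ∈ S)

/-- Isolated vertices: vertices outside the boundary incident to no edge. -/
def isolatedVerts (τ : Shape) : Finset (Fin τ.m) :=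
  Finset.univ.filter (fun v => v ∉ τ.boundary ∧ ∀ e ∈ τ.edges, v ∉ e)

/-- `C` is the vertex set of a connected component of `τ`. -/
def IsComponent (τ : Shape) (C : Finset (Fin τ.m)) : Prop :=
  ∃ v, C = Finset.univ.filter (fun w => τ.graph.Reachable v w)

/-- `C` is a floating component of `τ`: an edge-induced connected component with no path
to the boundary. -/
def IsFloating (τ : Shape) (C : Finset (Fin τ.m)) : Prop :=
  IsComponent τ C ∧ (∃ e ∈ τ.edges, ∀ v ∈ e, v ∈ C) ∧
    ∀ v ∈ C, ∀ w ∈ τ.boundary, ¬ τ.graph.Reachable v w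

/-- A component is tree-like if `|V(C)| = |E(C)| + 1`. -/
def TreeLike (τ : Shape) (C : Finset (Fin τ.m)) : Prop :=
  C.card = (edgesIn τ C).card + 1

/-- The number of tree-like floating components of `τ` having no path to `S`. -/
def floatTreeCount (τ : Shape) (S : Finset (Fin τ.m)) : ℕ :=
  (Finset.univ.filter (fun C : Finset (Fin τ.m) =>
    IsFloating τ C ∧ TreeLike τ C ∧ ∀ v ∈ C, ∀ s ∈ S, ¬ τ.graph.Reachable v s)).card

/-- The block-value bound `B_q(τ)` (version with floating-component factor). -/
def Bq (τ : Shape) (n q : ℕ) (p cnorm : ℝ) : ℝ :=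
  sSup { x : ℝ | ∃ S : Finset (Fin τ.m), IsSeparator τ S ∧
    x = (Real.sqrt n * q) ^ (Finset.univ \ S).card
        * Real.sqrt ((1 - p) / p) ^ (edgesIn τ S).card
        * Real.sqrt n ^ (isolatedVerts τ).card
        * Real.sqrt n ^ floatTreeCount τ S
        * cnorm ^ τ.edges.card }

/-- The block-value bound `B_q(τ)` (version without floating-component factor). -/
def Bq0 (τ : Shape) (n q : ℕ) (p cnorm : ℝ) : ℝ :=
  sSup { x : ℝ | ∃ S : Finset (Fin τ.m), IsSeparator τ S ∧
    x = (Real.sqrt n * q) ^ (Finset.univ \ S).card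
        * Real.sqrt ((1 - p) / p) ^ (edgesIn τ S).card
        * Real.sqrt n ^ (isolatedVerts τ).card
        * cnorm ^ τ.edges.card }

/-- The spectral norm (ℓ₂→ℓ₂ operator norm) of a rectangular real matrix. -/
def specNorm {α β : Type*} [Fintype α] [Fintype β] [DecidableEq α] [DecidableEq β]
    (M : Matrix α β ℝ) : ℝ :=
  ‖LinearMap.toContinuousLinearMap (Matrix.toEuclideanLin M)‖

end GM

namespace GM

/-- Step labels for edges of a shape: fresh, return, high-multiplicity, or singleton. -/
inductive StepLabel : Type
  | F | R | H | Sng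
deriving DecidableEq

/-- The candidate separator `S_B` built from a step-labeling `L` of the edges of `τ`. -/
def SB (τ : Shape) (L : Sym2 (Fin τ.m) → StepLabel) : Finset (Fin τ.m) :=
  Finset.univ.filter (fun v =>
    (v ∈ Finset.univ.image τ.U ∧ v ∈ Finset.univ.image τ.V) ∨
    (∃ e ∈ τ.edges, v ∈ e ∧ L e = StepLabel.H) ∨
    ((∃ e ∈ τ.edges, v ∈ e ∧ L e = StepLabel.F) ∧
      (∃ e ∈ τ.edges, v ∈ e ∧ L e = StepLabel.R)) ∨
    (v ∈ Finset.univ.image τ.U ∧ ∃ e ∈ τ.edges, v ∈ e ∧ L e = StepLabel.F) ∨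
    (v ∈ Finset.univ.image τ.V ∧ ∃ e ∈ τ.edges, v ∈ e ∧ L e = StepLabel.R))

end GM

namespace GM

lemma mem_SB_iff (τ : Shape) (L : Sym2 (Fin τ.m) → StepLabel) (v : Fin τ.m) :
    v ∈ SB τ L ↔
    (v ∈ Finset.univ.image τ.U ∧ v ∈ Finset.univ.image τ.V) ∨
    (∃ e ∈ τ.edges, v ∈ e ∧ L e = StepLabel.H) ∨
    ((∃ e ∈ τ.edges, v ∈ e ∧ L e = StepLabel.F) ∧
      (∃ e ∈ τ.edges, v ∈ e ∧ L e = StepLabel.R)) ∨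
    (v ∈ Finset.univ.image τ.U ∧ ∃ e ∈ τ.edges, v ∈ e ∧ L e = StepLabel.F) ∨
    (v ∈ Finset.univ.image τ.V ∧ ∃ e ∈ τ.edges, v ∈ e ∧ L e = StepLabel.R) := by
  simp [SB]

lemma aux_R_propagates (τ : Shape) (L : Sym2 (Fin τ.m) → StepLabel) :
    ∀ {u v : Fin τ.m} (w : τ.graph.Walk u v),
      (∀ x ∈ w.support, x ∉ SB τ L) → (∀ e ∈ w.edges, L e ≠ StepLabel.Sng) →
      (∃ e ∈ τ.edges, u ∈ e ∧ L e = StepLabel.R) →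
      ∃ e ∈ τ.edges, v ∈ e ∧ L e = StepLabel.R := by
  intro u v w
  induction w with
  | nil => intro _ _ h; exact h
  | cons h p ih =>
    rename_i u x v
    intro hsup hsng huR
    have hu : u ∉ SB τ L := hsup u (by simp)
    have he : s(u, x) ∈ τ.edges := by
      have h' := h
      rw [Shape.graph, SimpleGraph.fromEdgeSet_adj] at h'
      exact_mod_cast h'.1
    have heSng : L s(u, x) ≠ StepLabel.Sng := hsng _ (by simp)
    have heH : L s(u, x) ≠ StepLabel.H := by
      intro hH
      exact hu ((mem_SB_iff τ L u).2 (Or.inr (Or.inl ⟨s(u, x), he, by simp, hH⟩)))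
    have heF : L s(u, x) ≠ StepLabel.F := by
      intro hF
      exact hu ((mem_SB_iff τ L u).2 (Or.inr (Or.inr (Or.inl
        ⟨⟨s(u, x), he, by simp, hF⟩, huR⟩))))
    have heR : L s(u, x) = StepLabel.R := by
      cases hLe : L s(u, x) <;> simp_all
    exact ih (fun y hy => hsup y (by simp [hy])) (fun e hee => hsng e (by simp [hee]))
      ⟨s(u, x), he, by simp, heR⟩

lemma aux_start (τ : Shape) (L : Sym2 (Fin τ.m) → StepLabel) {u v : Fin τ.m}
    (w : τ.graph.Walk u v)
    (hsup : ∀ x ∈ w.support, x ∉ SB τ L) (hno : ∀ e ∈ w.edges, L e ≠ StepLabel.Sng)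
    (hU : u ∈ Finset.univ.image τ.U) :
    v = u ∨ ∃ e ∈ τ.edges, v ∈ e ∧ L e = StepLabel.R := by
  cases w with
  | nil => exact Or.inl rfl
  | cons h p =>
    rename_i x
    right
    have hu : u ∉ SB τ L := hsup u (by simp)
    have he : s(u, x) ∈ τ.edges := by
      have h' := h
      rw [Shape.graph, SimpleGraph.fromEdgeSet_adj] at h'
      exact_mod_cast h'.1
    have heSng : L s(u, x) ≠ StepLabel.Sng := hno _ (by simp)
    have heH : L s(u, x) ≠ StepLabel.H := by
      intro hH
      exact hu ((mem_SB_iff τ L u).2 (Or.inr (Or.inl ⟨s(u, x), he, by simp, hH⟩)))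
    have heF : L s(u, x) ≠ StepLabel.F := by
      intro hF
      exact hu ((mem_SB_iff τ L u).2 (Or.inr (Or.inr (Or.inr (Or.inl
        ⟨hU, s(u, x), he, by simp, hF⟩)))))
    have heR : L s(u, x) = StepLabel.R := by
      cases hLe : L s(u, x) <;> simp_all
    exact aux_R_propagates τ L p (fun y hy => hsup y (by simp [hy]))
      (fun e hee => hno e (by simp [hee])) ⟨s(u, x), he, by simp, heR⟩


end GM

open GM in
/-- Any path from the left boundary to the right boundary of a shape that avoids the
set `S_B` built from a step-labeling must use a singleton-labeled edge. -/
theorem path_avoiding_SB_has_singleton (τ : Shape) (L : Sym2 (Fin τ.m) → StepLabel) :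
    ∀ (i : Fin τ.a) (j : Fin τ.b) (w : τ.graph.Walk (τ.U i) (τ.V j)), w.IsPath →
      (∀ v ∈ w.support, v ∉ SB τ L) → ∃ e ∈ w.edges, L e = StepLabel.Sng := by
  intro i j w _ hsup
  by_contra hno
  push_neg at hno
  have hUi : τ.U i ∈ Finset.univ.image τ.U := Finset.mem_image.2 ⟨i, Finset.mem_univ _, rfl⟩
  have hu : τ.U i ∉ SB τ L := hsup _ (by simp)
  rcases aux_start τ L w hsup hno hUi with heq | hvR
  · exact hu ((mem_SB_iff τ L (τ.U i)).2 (Or.inl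
      ⟨hUi, Finset.mem_image.2 ⟨j, Finset.mem_univ _, heq ▸ rfl⟩⟩))
  · exact hsup _ (by simp) ((mem_SB_iff τ L _).2 (Or.inr (Or.inr (Or.inr (Or.inr
      ⟨Finset.mem_image.2 ⟨j, Finset.mem_univ _, rfl⟩, hvR⟩)))))
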